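/- Consider the SAP iteration: let A be a real m×n matrix, x ∈ ℝⁿ, b = A·x with Aᵀ·b ≠ 0, and let A₁, …, A_k be submatrices of A formed by groups of rows of A whose union comprises all rows of A. Define x₀ = (‖b‖²/‖Aᵀ·b‖²)·(Aᵀ·b), and for each s ≥ 0 define recursively p⁽ˢ⁾₀ = x_s and, for i = 1, …, k, p⁽ˢ⁾ᵢ = the orthogonal projection of x onto the subspace spanned by p⁽ˢ⁾ᵢ₋₁ together with the rows of Aᵢ; set x_{s+1} = p⁽ˢ⁾_k. Let x̄ be the orthogonal projection of x onto the row space of A. If (y_s) is any convergent subsequence of (x_s), then lim_{s→∞} y_s = x̄. -/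

import Mathlib

open scoped RealInnerProductSpace
open Matrix Filter Topology

/-!
Every partial projection `p ↦ proj_{span(p, rows of Aᵢ)} x` keeps the anchor `p` in its subspace,
so by Pythagoras `‖x - p‖²` drops by exactly the squared length of the step. Hence `‖x - x_s‖²`
is antitone, and the step lengths of the `s`-th sweep are bounded by `‖x - x_s‖² - ‖x - x_{s+1}‖² → 0`.
Along a convergent subsequence all intermediate points of a sweep therefore converge to the same
limit `y`, and passing to the limit in the orthogonality relations shows `x - y ⊥` the rows of every
block. All iterates, and hence `y`, lie in the row space, so `y` is the orthogonal projection `x̄`.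
-/

/-- The subspace spanned by a vector `q` together with the rows of the block of
`A` indexed by `g i`. -/
def sapBlockSubspace {m n : ℕ} (A : Matrix (Fin m) (Fin n) ℝ)
    (g : ℕ → Set (Fin m)) (q : EuclideanSpace ℝ (Fin n)) (i : ℕ) :
    Submodule ℝ (EuclideanSpace ℝ (Fin n)) :=
  Submodule.span ℝ (insert q ((fun j : Fin m => (WithLp.toLp 2 (A j) : EuclideanSpace ℝ (Fin n))) '' g i))

theorem tendsto_sub_succ_of_antitone {G : ℕ → ℝ} (hG : Antitone G) (hbdd : BddBelow (Set.range G)) :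
    Tendsto (fun s => G s - G (s + 1)) atTop (𝓝 0) := by
  have hlim := tendsto_atTop_ciInf hG hbdd
  simpa using hlim.sub (hlim.comp (tendsto_add_atTop_nat 1))

section ProjectionSweep

variable {E : Type*} [NormedAddCommGroup E] [InnerProductSpace ℝ E]

theorem inner_eq_zero_of_mem_span_range {ι : Type*} {f : ι → E} {v : E}
    (h : ∀ j, ⟪v, f j⟫ = 0) : ∀ w ∈ Submodule.span ℝ (Set.range f), ⟪v, w⟫ = 0 := by
  have hle : Submodule.span ℝ (Set.range f) ≤ (ℝ ∙ v)ᗮ := by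
    rw [Submodule.span_le]
    rintro _ ⟨j, rfl⟩
    exact Submodule.mem_orthogonal_singleton_iff_inner_right.2 (h j)
  exact fun w hw => Submodule.mem_orthogonal_singleton_iff_inner_right.1 (hle hw)

def IsProjectionSweep (x : E) (S : ℕ → Set E) (k : ℕ) (p : ℕ → E) : Prop :=
  ∀ i < k, p (i + 1) ∈ Submodule.span ℝ (insert (p i) (S i)) ∧
    ∀ w ∈ Submodule.span ℝ (insert (p i) (S i)), ⟪x - p (i + 1), w⟫ = 0

namespace IsProjectionSweep

variable {x : E} {S : ℕ → Set E} {k : ℕ} {p : ℕ → E}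

theorem norm_sub_sq_eq (h : IsProjectionSweep x S k p) {i : ℕ} (hi : i < k) :
    ‖x - p i‖ ^ 2 = ‖x - p (i + 1)‖ ^ 2 + ‖p (i + 1) - p i‖ ^ 2 := by
  have horth : ⟪x - p (i + 1), p (i + 1) - p i⟫ = 0 :=
    (h i hi).2 _ (Submodule.sub_mem _ (h i hi).1 (Submodule.subset_span (Set.mem_insert _ _)))
  rw [show x - p i = (x - p (i + 1)) + (p (i + 1) - p i) by abel, norm_add_sq_real, horth]
  ring

theorem norm_sub_sq_add_sum (h : IsProjectionSweep x S k p) {j : ℕ} (hj : j ≤ k) :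
    ‖x - p j‖ ^ 2 + ∑ i ∈ Finset.range j, ‖p (i + 1) - p i‖ ^ 2 = ‖x - p 0‖ ^ 2 := by
  induction j with
  | zero => simp
  | succ j ih =>
    rw [Finset.sum_range_succ, ← ih (by omega), h.norm_sub_sq_eq (i := j) (by omega)]
    ring

theorem norm_sub_sq_le (h : IsProjectionSweep x S k p) : ‖x - p k‖ ^ 2 ≤ ‖x - p 0‖ ^ 2 := by
  rw [← h.norm_sub_sq_add_sum le_rfl]
  exact le_add_of_nonneg_right (Finset.sum_nonneg fun i _ => sq_nonneg _)

theorem norm_step_sq_le (h : IsProjectionSweep x S k p) {i : ℕ} (hi : i < k) :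
    ‖p (i + 1) - p i‖ ^ 2 ≤ ‖x - p 0‖ ^ 2 - ‖x - p k‖ ^ 2 := by
  rw [← h.norm_sub_sq_add_sum le_rfl, add_sub_cancel_left]
  exact Finset.single_le_sum (f := fun i => ‖p (i + 1) - p i‖ ^ 2) (fun i _ => sq_nonneg _)
    (Finset.mem_range.2 hi)

theorem mem_of_subset {K : Submodule ℝ E} (h : IsProjectionSweep x S k p)
    (hS : ∀ i < k, S i ⊆ K) (h0 : p 0 ∈ K) {j : ℕ} (hj : j ≤ k) : p j ∈ K := by
  induction j with
  | zero => exact h0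
  | succ j ih =>
    exact Submodule.span_le.2 (Set.insert_subset (ih (by omega)) (hS j (by omega))) (h j (by omega)).1

theorem inner_sub_eq_zero (h : IsProjectionSweep x S k p) {i : ℕ} (hi : i < k) {w : E}
    (hw : w ∈ S i) : ⟪x - p (i + 1), w⟫ = 0 :=
  (h i hi).2 w (Submodule.subset_span (Set.mem_insert_of_mem _ hw))

end IsProjectionSweep

section Iteration

variable {x : E} {S : ℕ → Set E} {k : ℕ} {X : ℕ → E} {P : ℕ → ℕ → E}
  (hP0 : ∀ s, P s 0 = X s) (hPk : ∀ s, P s k = X (s + 1))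
  (hP : ∀ s, IsProjectionSweep x S k (P s))
include hP0 hPk hP

theorem antitone_norm_sub_sq_of_sweeps : Antitone fun s => ‖x - X s‖ ^ 2 :=
  antitone_nat_of_succ_le fun s => by simpa only [hP0, hPk] using (hP s).norm_sub_sq_le

theorem tendsto_sweep_step_zero {i : ℕ} (hi : i < k) :
    Tendsto (fun s => P s (i + 1) - P s i) atTop (𝓝 0) := by
  have hgap := tendsto_sub_succ_of_antitone (antitone_norm_sub_sq_of_sweeps hP0 hPk hP)
    ⟨0, by rintro _ ⟨s, rfl⟩; positivity⟩
  have hsq : Tendsto (fun s => ‖P s (i + 1) - P s i‖ ^ 2) atTop (𝓝 0) :=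
    tendsto_of_tendsto_of_tendsto_of_le_of_le tendsto_const_nhds hgap (fun s => sq_nonneg _)
      fun s => by simpa only [hP0, hPk] using (hP s).norm_step_sq_le hi
  rw [tendsto_zero_iff_norm_tendsto_zero]
  simpa only [Real.sqrt_sq (norm_nonneg _), Real.sqrt_zero] using hsq.sqrt

theorem tendsto_sweep_of_tendsto {φ : ℕ → ℕ} (hφ : Tendsto φ atTop atTop) {y : E}
    (hy : Tendsto (fun s => X (φ s)) atTop (𝓝 y)) {j : ℕ} (hj : j ≤ k) :
    Tendsto (fun s => P (φ s) j) atTop (𝓝 y) := by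
  induction j with
  | zero => simpa only [hP0] using hy
  | succ j ih =>
    have hstep := (tendsto_sweep_step_zero hP0 hPk hP (i := j) (by omega)).comp hφ
    simpa using (ih (by omega)).add hstep

theorem inner_sub_limit_eq_zero {φ : ℕ → ℕ} (hφ : Tendsto φ atTop atTop) {y : E}
    (hy : Tendsto (fun s => X (φ s)) atTop (𝓝 y)) {i : ℕ} (hi : i < k) {w : E} (hw : w ∈ S i) :
    ⟪x - y, w⟫ = 0 := by
  have hlim : Tendsto (fun s => ⟪x - P (φ s) (i + 1), w⟫) atTop (𝓝 ⟪x - y, w⟫) :=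
    (tendsto_const_nhds.sub (tendsto_sweep_of_tendsto hP0 hPk hP hφ hy hi)).inner
      tendsto_const_nhds
  simp only [fun s => (hP (φ s)).inner_sub_eq_zero hi hw] at hlim
  exact tendsto_nhds_unique hlim tendsto_const_nhds

end Iteration

end ProjectionSweep

theorem toLp_transpose_mulVec_mem_span_rows {ι κ : Type*} [Fintype ι] (A : Matrix ι κ ℝ)
    (v : ι → ℝ) : WithLp.toLp 2 (Aᵀ *ᵥ v) ∈
      Submodule.span ℝ (Set.range fun j => (WithLp.toLp 2 (A j) : EuclideanSpace ℝ κ)) := by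
  rw [mulVec_transpose, vecMul_eq_sum, WithLp.toLp_sum]
  exact Submodule.sum_mem _ fun j _ => by
    rw [WithLp.toLp_smul]
    exact Submodule.smul_mem _ _ (Submodule.subset_span ⟨j, rfl⟩)

theorem sap_subsequence_limit {m n k : ℕ}
    (A : Matrix (Fin m) (Fin n) ℝ) (x : EuclideanSpace ℝ (Fin n))
    (b : EuclideanSpace ℝ (Fin m))
    (Atb : EuclideanSpace ℝ (Fin n)) (hAtb : Atb = Aᵀ.mulVec b)
    (g : ℕ → Set (Fin m)) (hcover : ∀ j : Fin m, ∃ i < k, j ∈ g i)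
    (xseq : ℕ → EuclideanSpace ℝ (Fin n))
    (h0 : xseq 0 = (‖b‖ ^ 2 / ‖Atb‖ ^ 2) • Atb)
    (hstep : ∀ s : ℕ, ∃ p : ℕ → EuclideanSpace ℝ (Fin n),
      p 0 = xseq s ∧ p k = xseq (s + 1) ∧
      ∀ i < k, p (i + 1) ∈ sapBlockSubspace A g (p i) i ∧
        ∀ w ∈ sapBlockSubspace A g (p i) i, ⟪x - p (i + 1), w⟫ = 0)
    (xbar : EuclideanSpace ℝ (Fin n))
    (hxbarmem : xbar ∈ Submodule.span ℝ
      (Set.range fun j : Fin m => (WithLp.toLp 2 (A j) : EuclideanSpace ℝ (Fin n))))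
    (hxbarorth : ∀ w ∈ Submodule.span ℝ
      (Set.range fun j : Fin m => (WithLp.toLp 2 (A j) : EuclideanSpace ℝ (Fin n))),
      ⟪x - xbar, w⟫ = 0)
    (φ : ℕ → ℕ) (hφ : StrictMono φ) (y : EuclideanSpace ℝ (Fin n))
    (hy : Tendsto (fun s => xseq (φ s)) atTop (𝓝 y)) :
    y = xbar := by
  set row : Fin m → EuclideanSpace ℝ (Fin n) := fun j => WithLp.toLp 2 (A j)
  set R := Submodule.span ℝ (Set.range row)
  choose P hP0 hPk hP using hstep
  have hsweep : ∀ s, IsProjectionSweep x (fun i => row '' g i) k (P s) := hP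
  have hX : ∀ s, xseq s ∈ R := by
    intro s
    induction s with
    | zero =>
      rw [h0, show Atb = WithLp.toLp 2 (Aᵀ *ᵥ b) from congrArg (WithLp.toLp 2) hAtb]
      exact R.smul_mem _ (toLp_transpose_mulVec_mem_span_rows A b)
    | succ s ih =>
      rw [← hPk s]
      exact (hsweep s).mem_of_subset (fun i _ => (Set.image_subset_range _ _).trans Submodule.subset_span)
        (hP0 s ▸ ih) le_rfl
  have hy_mem : y ∈ R :=
    R.closed_of_finiteDimensional.mem_of_tendsto hy (Eventually.of_forall fun s => hX (φ s))
  have hy_orth : ∀ w ∈ R, ⟪x - y, w⟫ = 0 := inner_eq_zero_of_mem_span_range fun j => by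
    obtain ⟨i, hi, hj⟩ := hcover j
    exact inner_sub_limit_eq_zero hP0 hPk hsweep hφ.tendsto_atTop hy hi ⟨j, hj, rfl⟩
  rw [← R.eq_starProjection_of_mem_of_inner_eq_zero hy_mem hy_orth,
    R.eq_starProjection_of_mem_of_inner_eq_zero hxbarmem hxbarorth]
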